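/- arXiv:2006.11742 — 10 statements merged into one kernel-verified Lean document; each statement's English description precedes it below -/
import Mathlib

section
/- Let ξ ∈ ℝ and η > 0, and define G : ℝ → [0,∞) by G(x) = max{1, |ηx − ξ|}. Set γ = (ξ−1)/η and ρ = (ξ+1)/η. Then the infimum over all x, y ∈ ℝ with x + y ≠ 2 of (G(x) + G(y))/|2 − x − y| equals 1/(1−γ) if ξ ≤ η, and equals 1/(ρ−1) if ξ ≥ η. -/
lemma aux_key (ξ η d x : ℝ) (hη : 0 < η) (hd : 1 ≤ d)
    (h1 : η - ξ ≤ d - 1) (h2 : ξ - η ≤ d - 1) :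
    η * |1 - x| ≤ d * max 1 |η * x - ξ| := by
  rcases le_total 1 (|η * x - ξ|) with hm | hm
  · rw [max_eq_right hm]
    rcases abs_cases (1 - x) with ⟨e1, p1⟩ | ⟨e1, p1⟩ <;>
      rcases abs_cases (η * x - ξ) with ⟨e2, p2⟩ | ⟨e2, p2⟩ <;>
        rw [e1] <;> rw [e2] at hm ⊢ <;>
          nlinarith [mul_nonneg (by linarith : (0:ℝ) ≤ d - 1) (by linarith : (0:ℝ) ≤ |η * x - ξ| - 1), hm]
  · rw [max_eq_left hm]
    have := abs_le.1 hm
    rcases abs_cases (1 - x) with ⟨e1, p1⟩ | ⟨e1, p1⟩ <;> rw [e1] <;> nlinarith [this.1, this.2]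

lemma main_aux (ξ η d z : ℝ) (hη : 0 < η) (G : ℝ → ℝ)
    (hG : ∀ x, G x = max 1 |η * x - ξ|) (hd : 1 ≤ d)
    (h1 : η - ξ ≤ d - 1) (h2 : ξ - η ≤ d - 1)
    (hz1 : |η * z - ξ| = 1) (hz2 : |1 - z| = d / η) :
    sInf {v : ℝ | ∃ x y : ℝ, x + y ≠ 2 ∧ v = (G x + G y) / |2 - x - y|} = η / d := by
  have hd0 : (0:ℝ) < d := lt_of_lt_of_le one_pos hd
  have hzne : z ≠ 1 := by
    intro h
    rw [h] at hz2
    simp at hz2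
    have : d / η > 0 := div_pos hd0 hη
    linarith [hz2 ▸ this]
  have hGz : G z = 1 := by rw [hG, hz1]; simp
  have habs2 : |2 - z - z| = 2 * (d / η) := by
    rw [show (2 - z - z : ℝ) = 2 * (1 - z) by ring, abs_mul, hz2]
    norm_num
  have hmem : (η / d) ∈ {v : ℝ | ∃ x y : ℝ, x + y ≠ 2 ∧ v = (G x + G y) / |2 - x - y|} := by
    refine ⟨z, z, ?_, ?_⟩
    · intro h
      apply hzne; linarith
    · rw [hGz, habs2]
      field_simp
      ring
  apply le_antisymm
  · exact csInf_le ⟨0, by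
      rintro v ⟨x, y, hxy, rfl⟩
      have : (1:ℝ) ≤ G x := by rw [hG]; exact le_max_left _ _
      have : (1:ℝ) ≤ G y := by rw [hG]; exact le_max_left _ _
      positivity⟩ hmem
  · apply le_csInf ⟨_, hmem⟩
    rintro v ⟨x, y, hxy, rfl⟩
    have hGx : η * |1 - x| ≤ d * G x := by rw [hG]; exact aux_key ξ η d x hη hd h1 h2
    have hGy : η * |1 - y| ≤ d * G y := by rw [hG]; exact aux_key ξ η d y hη hd h1 h2
    have habs : |2 - x - y| ≤ |1 - x| + |1 - y| := by
      calc |2 - x - y| = |(1 - x) + (1 - y)| := by ring_nf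
        _ ≤ |1 - x| + |1 - y| := abs_add_le _ _
    have hpos : 0 < |2 - x - y| := abs_pos.2 (by intro h; apply hxy; linarith)
    rw [div_le_div_iff₀ hd0 hpos]
    nlinarith [hGx, hGy, mul_le_mul_of_nonneg_left habs (le_of_lt hη)]

theorem stmt_0 (ξ η : ℝ) (hη : 0 < η)
    (G : ℝ → ℝ) (hG : ∀ x, G x = max 1 |η * x - ξ|)
    (γ ρ : ℝ) (hγ : γ = (ξ - 1) / η) (hρ : ρ = (ξ + 1) / η) :
    (ξ ≤ η →
      sInf {v : ℝ | ∃ x y : ℝ, x + y ≠ 2 ∧ v = (G x + G y) / |2 - x - y|} = 1 / (1 - γ)) ∧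
    (η ≤ ξ →
      sInf {v : ℝ | ∃ x y : ℝ, x + y ≠ 2 ∧ v = (G x + G y) / |2 - x - y|} = 1 / (ρ - 1)) := by
  have hηne : η ≠ 0 := ne_of_gt hη
  constructor
  · intro hle
    have h1 : sInf _ = η / (η + 1 - ξ) := main_aux ξ η (η + 1 - ξ) γ hη G hG
      (by linarith) (by linarith) (by linarith)
      (by rw [hγ]; field_simp; simp)
      (by rw [hγ, abs_of_nonneg (by rw [sub_nonneg, div_le_one hη]; linarith)]
          field_simp; ring)
    rw [h1, hγ, show 1 - (ξ - 1) / η = (η + 1 - ξ) / η from by field_simp; ring, one_div_div]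
  · intro hle
    have h1 : sInf _ = η / (ξ + 1 - η) := main_aux ξ η (ξ + 1 - η) ρ hη G hG
      (by linarith) (by linarith) (by linarith)
      (by rw [hρ]; field_simp; simp)
      (by rw [hρ, abs_of_nonpos (by rw [sub_nonpos, le_div_iff₀ hη]; linarith)]
          field_simp; ring)
    rw [h1, hρ, show (ξ + 1) / η - 1 = (ξ + 1 - η) / η from by field_simp, one_div_div]
end

section
/- Let ξ ∈ ℝ and η > 0, and define G(x) = max{1, |ηx − ξ|}, γ = (ξ−1)/η, ρ = (ξ+1)/η. Then the infimum over all x, y ∈ ℝ with x + y ≠ 2 of (|2 − y|·G(x) + |x|·G(y))/|2 − x − y| equals 1/(1−γ) if 1 ≤ ξ ≤ η, equals 1/(ρ−1) if η ≤ ξ ≤ 2η − 1, and equals 1 otherwise. -/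
private lemma auxC (ξ η t : ℝ) (hη : 0 < η) :
    η * |1 - t| ≤ (1 + |ξ - η|) * max 1 |η * t - ξ| := by
  have h1 : η * |1 - t| = |η * t - η| := by
    rw [show η * t - η = η * (t - 1) by ring, abs_mul, abs_of_pos hη, abs_sub_comm]
  have h2 : |η * t - η| ≤ |η * t - ξ| + |ξ - η| := abs_sub_le _ ξ _
  have h3 : |η * t - ξ| ≤ max 1 |η * t - ξ| := le_max_right _ _
  have h4 : (1:ℝ) ≤ max 1 |η * t - ξ| := le_max_left _ _
  nlinarith [mul_nonneg (abs_nonneg (ξ - η)) (sub_nonneg.mpr h4)]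

private lemma auxMain (ξ η x y : ℝ) (hη : 0 < η) :
    η * |2 - x - y| ≤
      (1 + |ξ - η|) * (|2 - y| * max 1 |η * x - ξ| + |x| * max 1 |η * y - ξ|) := by
  have hx := auxC ξ η x hη
  have hy := auxC ξ η y hη
  have t1 : η * |2 - x - y| = |(2 - y) * (η * (1 - x)) + x * (η * (1 - y))| := by
    rw [show (2 - y) * (η * (1 - x)) + x * (η * (1 - y)) = η * (2 - x - y) by ring,
      abs_mul, abs_of_pos hη]
  rw [t1]
  calc |(2 - y) * (η * (1 - x)) + x * (η * (1 - y))|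
      ≤ |(2 - y) * (η * (1 - x))| + |x * (η * (1 - y))| := abs_add_le _ _
    _ = |2 - y| * (η * |1 - x|) + |x| * (η * |1 - y|) := by
        rw [abs_mul, abs_mul, abs_mul, abs_mul, abs_of_pos hη]
    _ ≤ |2 - y| * ((1 + |ξ - η|) * max 1 |η * x - ξ|)
        + |x| * ((1 + |ξ - η|) * max 1 |η * y - ξ|) :=
        add_le_add (mul_le_mul_of_nonneg_left hx (abs_nonneg _))
          (mul_le_mul_of_nonneg_left hy (abs_nonneg _))
    _ = (1 + |ξ - η|) * (|2 - y| * max 1 |η * x - ξ| + |x| * max 1 |η * y - ξ|) := by ring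

private lemma inf_eq {S : Set ℝ} {c : ℝ} (hmem : c ∈ S) (hlb : ∀ v ∈ S, c ≤ v) :
    sInf S = c :=
  le_antisymm (csInf_le ⟨c, hlb⟩ hmem) (le_csInf ⟨c, hmem⟩ hlb)

private lemma lb_gen (ξ η : ℝ) (hη : 0 < η) (G : ℝ → ℝ) (hG : ∀ x, G x = max 1 |η * x - ξ|)
    (x y : ℝ) (hne : x + y ≠ 2) :
    η / (1 + |ξ - η|) ≤ (|2 - y| * G x + |x| * G y) / |2 - x - y| := by
  have hs : 0 < |2 - x - y| := abs_pos.mpr (fun h => hne (by linarith))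
  have hd : 0 < 1 + |ξ - η| := by positivity
  rw [div_le_div_iff₀ hd hs, hG, hG]
  have := auxMain ξ η x y hη
  linarith

private lemma lb_one (ξ η : ℝ) (hη : 0 < η) (G : ℝ → ℝ) (hG : ∀ x, G x = max 1 |η * x - ξ|)
    (x y : ℝ) (hne : x + y ≠ 2) :
    1 ≤ (|2 - y| * G x + |x| * G y) / |2 - x - y| := by
  have hs : 0 < |2 - x - y| := abs_pos.mpr (fun h => hne (by linarith))
  rw [le_div_iff₀ hs, hG, hG]
  have h1 := le_abs_self (2 - y)
  have h2 := neg_abs_le (2 - y)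
  have h3 := le_abs_self x
  have h4 := neg_abs_le x
  have habs : |2 - x - y| ≤ |2 - y| + |x| := abs_le.mpr ⟨by linarith, by linarith⟩
  nlinarith [mul_le_mul_of_nonneg_left (le_max_left 1 |η * x - ξ|) (abs_nonneg (2 - y)),
    mul_le_mul_of_nonneg_left (le_max_left 1 |η * y - ξ|) (abs_nonneg x)]

theorem stmt_1 (ξ η : ℝ) (hη : 0 < η)
    (G : ℝ → ℝ) (hG : ∀ x, G x = max 1 |η * x - ξ|)
    (γ ρ : ℝ) (hγ : γ = (ξ - 1) / η) (hρ : ρ = (ξ + 1) / η) :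
    (1 ≤ ξ ∧ ξ ≤ η →
      sInf {v : ℝ | ∃ x y : ℝ, x + y ≠ 2 ∧ v = (|2 - y| * G x + |x| * G y) / |2 - x - y|}
        = 1 / (1 - γ)) ∧
    (η ≤ ξ ∧ ξ ≤ 2 * η - 1 →
      sInf {v : ℝ | ∃ x y : ℝ, x + y ≠ 2 ∧ v = (|2 - y| * G x + |x| * G y) / |2 - x - y|}
        = 1 / (ρ - 1)) ∧
    (¬ (1 ≤ ξ ∧ ξ ≤ η) → ¬ (η ≤ ξ ∧ ξ ≤ 2 * η - 1) →
      sInf {v : ℝ | ∃ x y : ℝ, x + y ≠ 2 ∧ v = (|2 - y| * G x + |x| * G y) / |2 - x - y|}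
        = 1) := by
  have hη' : η ≠ 0 := ne_of_gt hη
  have hGγ : G γ = 1 := by
    rw [hG, hγ, show η * ((ξ - 1) / η) - ξ = -1 by field_simp; ring]
    norm_num
  have hGρ : G ρ = 1 := by
    rw [hG, hρ, show η * ((ξ + 1) / η) - ξ = 1 by field_simp; ring]
    norm_num
  refine ⟨?_, ?_, ?_⟩
  · rintro ⟨hξ1, hξ2⟩
    have hγ0 : 0 ≤ γ := by
      rw [hγ]; exact div_nonneg (by linarith) (le_of_lt hη)
    have hγ1 : γ < 1 := by
      rw [hγ, div_lt_one hη]; linarith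
    have hmem : 1 / (1 - γ) ∈
        {v : ℝ | ∃ x y : ℝ, x + y ≠ 2 ∧ v = (|2 - y| * G x + |x| * G y) / |2 - x - y|} := by
      refine ⟨γ, γ, by intro h; linarith, ?_⟩
      rw [hGγ, abs_of_pos (by linarith : (0:ℝ) < 2 - γ), abs_of_nonneg hγ0,
        abs_of_pos (by linarith : (0:ℝ) < 2 - γ - γ)]
      rw [div_eq_div_iff (by linarith) (by linarith)]
      ring
    refine inf_eq hmem ?_
    rintro v ⟨x, y, hne, rfl⟩
    have h1γ : 1 - γ = (η - ξ + 1) / η := by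
      rw [hγ]; field_simp; ring
    have hc : 1 / (1 - γ) = η / (1 + |ξ - η|) := by
      rw [abs_of_nonpos (by linarith : ξ - η ≤ 0), h1γ, one_div_div]
      congr 1; ring
    rw [hc]
    exact lb_gen ξ η hη G hG x y hne
  · rintro ⟨hξ1, hξ2⟩
    have hρ1 : 1 < ρ := by
      rw [hρ, lt_div_iff₀ hη]; linarith
    have hρ2 : ρ ≤ 2 := by
      rw [hρ, div_le_iff₀ hη]; linarith
    have hmem : 1 / (ρ - 1) ∈
        {v : ℝ | ∃ x y : ℝ, x + y ≠ 2 ∧ v = (|2 - y| * G x + |x| * G y) / |2 - x - y|} := by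
      refine ⟨ρ, ρ, by intro h; linarith, ?_⟩
      rw [hGρ, abs_of_nonneg (by linarith : (0:ℝ) ≤ 2 - ρ), abs_of_pos (by linarith : (0:ℝ) < ρ),
        abs_of_neg (by linarith : 2 - ρ - ρ < (0:ℝ))]
      rw [div_eq_div_iff (by linarith) (by linarith)]
      ring
    refine inf_eq hmem ?_
    rintro v ⟨x, y, hne, rfl⟩
    have h1ρ : ρ - 1 = (ξ + 1 - η) / η := by
      rw [hρ]; field_simp
    have hc : 1 / (ρ - 1) = η / (1 + |ξ - η|) := by
      rw [abs_of_nonneg (by linarith : (0:ℝ) ≤ ξ - η), h1ρ, one_div_div]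
      congr 1; ring
    rw [hc]
    exact lb_gen ξ η hη G hG x y hne
  · intro hA hB
    have hwit : (1:ℝ) ∈
        {v : ℝ | ∃ x y : ℝ, x + y ≠ 2 ∧ v = (|2 - y| * G x + |x| * G y) / |2 - x - y|} := by
      by_cases hξ1 : ξ ≤ 1
      · -- γ ≤ 0, use x = y = γ
        have hγ0 : γ ≤ 0 := by
          rw [hγ]
          exact div_nonpos_of_nonpos_of_nonneg (by linarith) (le_of_lt hη)
        refine ⟨γ, γ, by intro h; linarith, ?_⟩
        rw [hGγ, abs_of_pos (by linarith : (0:ℝ) < 2 - γ), abs_of_nonpos hγ0,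
          abs_of_pos (by linarith : (0:ℝ) < 2 - γ - γ)]
        rw [eq_div_iff (by linarith : (2 - γ - γ) ≠ 0)]
        ring
      · -- ξ > 1, hence η < ξ and 2η - 1 < ξ, so ρ > 2
        push_neg at hξ1 hA hB
        have hηξ : η < ξ := hA (le_of_lt hξ1)
        have h2η : 2 * η - 1 < ξ := hB (le_of_lt hηξ)
        have hρ2 : 2 < ρ := by
          rw [hρ, lt_div_iff₀ hη]; linarith
        refine ⟨ρ, ρ, by intro h; linarith, ?_⟩
        rw [hGρ, abs_of_neg (by linarith : 2 - ρ < (0:ℝ)), abs_of_pos (by linarith : (0:ℝ) < ρ),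
          abs_of_neg (by linarith : 2 - ρ - ρ < (0:ℝ))]
        rw [eq_div_iff (by linarith : -(2 - ρ - ρ) ≠ 0)]
        ring
    refine inf_eq hwit ?_
    rintro v ⟨x, y, hne, rfl⟩
    exact lb_one ξ η hη G hG x y hne
end

section
/- Let ξ ∈ ℝ and η > 0, and define G(x) = max{1, |ηx − ξ|}, γ = (ξ−1)/η, ρ = (ξ+1)/η. Then the infimum over all x, y ∈ ℝ with x + y ≠ 2 of (|3 − y|·G(x) + |x + 1|·G(y))/|2 − x − y| equals 2/(1−γ) if 1 − η ≤ ξ ≤ η, equals 2/(ρ−1) if η ≤ ξ ≤ 3η − 1, and equals 1 otherwise. -/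
theorem stmt_2 (ξ η : ℝ) (hη : 0 < η)
    (G : ℝ → ℝ) (hG : ∀ x, G x = max 1 |η * x - ξ|)
    (γ ρ : ℝ) (hγ : γ = (ξ - 1) / η) (hρ : ρ = (ξ + 1) / η) :
    (1 - η ≤ ξ ∧ ξ ≤ η →
      sInf {v : ℝ | ∃ x y : ℝ, x + y ≠ 2 ∧ v = (|3 - y| * G x + |x + 1| * G y) / |2 - x - y|}
        = 2 / (1 - γ)) ∧
    (η ≤ ξ ∧ ξ ≤ 3 * η - 1 →
      sInf {v : ℝ | ∃ x y : ℝ, x + y ≠ 2 ∧ v = (|3 - y| * G x + |x + 1| * G y) / |2 - x - y|}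
        = 2 / (ρ - 1)) ∧
    (¬ (1 - η ≤ ξ ∧ ξ ≤ η) → ¬ (η ≤ ξ ∧ ξ ≤ 3 * η - 1) →
      sInf {v : ℝ | ∃ x y : ℝ, x + y ≠ 2 ∧ v = (|3 - y| * G x + |x + 1| * G y) / |2 - x - y|}
        = 1) := by
  have hG1 : ∀ x, 1 ≤ G x := fun x => by rw [hG]; exact le_max_left _ _
  have hGabs : ∀ x, |η * x - ξ| ≤ G x := fun x => by rw [hG]; exact le_max_right _ _
  have hG0 : ∀ x, 0 ≤ G x := fun x => le_trans zero_le_one (hG1 x)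
  have hcd_bound : ∀ L s t : ℝ, 0 ≤ L → L ≤ 1 → |s| ≤ 1 →
      |L * (η * t - ξ) + s * (1 - L)| ≤ G t := by
    intro L s t hL0 hL1 hs
    calc |L * (η * t - ξ) + s * (1 - L)| ≤ |L * (η * t - ξ)| + |s * (1 - L)| := abs_add_le _ _
      _ = L * |η * t - ξ| + |s| * (1 - L) := by
          rw [abs_mul, abs_mul, abs_of_nonneg hL0,
            abs_of_nonneg (by linarith : (0:ℝ) ≤ 1 - L)]
      _ ≤ L * G t + 1 * (1 - L) :=
          add_le_add (mul_le_mul_of_nonneg_left (hGabs t) hL0)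
            (mul_le_mul_of_nonneg_right hs (by linarith))
      _ ≤ G t := by nlinarith [hG1 t]
  set S := {v : ℝ | ∃ x y : ℝ, x + y ≠ 2 ∧
      v = (|3 - y| * G x + |x + 1| * G y) / |2 - x - y|} with hS
  -- general lower-bound machine
  have lowerb : ∀ m : ℝ, 0 ≤ m →
      (∀ x y : ℝ, ∃ c d : ℝ, |c| ≤ G x ∧ |d| ≤ G y ∧
        (3 - y) * c - (x + 1) * d = m * (x + y - 2)) →
      ∀ v ∈ S, m ≤ v := by
    intro m hm hcd v hv
    obtain ⟨x, y, hxy, rfl⟩ := hv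
    obtain ⟨c, d, hc, hd, hid⟩ := hcd x y
    have hden : 0 < |2 - x - y| := by
      rw [abs_pos]
      intro h; exact hxy (by linarith)
    rw [le_div_iff₀ hden]
    have h1 : m * |2 - x - y| = |(3 - y) * c - (x + 1) * d| := by
      have habs : x + y - 2 = -(2 - x - y) := by ring
      rw [hid, abs_mul, abs_of_nonneg hm, habs, abs_neg]
    rw [h1]
    calc |(3 - y) * c - (x + 1) * d| ≤ |(3 - y) * c| + |(x + 1) * d| := abs_sub _ _
      _ = |3 - y| * |c| + |x + 1| * |d| := by rw [abs_mul, abs_mul]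
      _ ≤ |3 - y| * G x + |x + 1| * G y := by gcongr
  -- diagonal membership helper
  have memdiag : ∀ t : ℝ, t ≠ 1 →
      (|3 - t| * G t + |t + 1| * G t) / |2 - t - t| ∈ S := by
    intro t ht
    exact ⟨t, t, fun h => ht (by linarith), rfl⟩
  refine ⟨?_, ?_, ?_⟩
  · -- Region 1
    rintro ⟨h1, h2⟩
    have hγm1 : -1 ≤ γ := by
      rw [hγ, le_div_iff₀ hη]; linarith
    have hγ1 : γ < 1 := by
      rw [hγ, div_lt_iff₀ hη]; nlinarith
    have hηγ : η * γ - ξ = -1 := by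
      rw [hγ]; field_simp; ring
    have hGγ : G γ = 1 := by
      rw [hG, hηγ]; norm_num
    have h1γ : (0:ℝ) < 1 - γ := by linarith
    -- membership
    have hval : (2 : ℝ) / (1 - γ) = (|3 - γ| * G γ + |γ + 1| * G γ) / |2 - γ - γ| := by
      rw [hGγ, abs_of_pos (by linarith : (0:ℝ) < 3 - γ),
        abs_of_nonneg (by linarith : (0:ℝ) ≤ γ + 1),
        abs_of_pos (by linarith : (0:ℝ) < 2 - γ - γ)]
      rw [div_eq_div_iff h1γ.ne' (by linarith : (2:ℝ) - γ - γ ≠ 0)]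
      ring
    have hmem : (2 : ℝ) / (1 - γ) ∈ S := hval ▸ memdiag γ (by linarith)
    -- lower bound
    have hden1 : (0:ℝ) < 1 + η - ξ := by linarith
    set L : ℝ := 1 / (1 + η - ξ) with hLdef
    have hL : L * (1 + η - ξ) = 1 := by
      rw [hLdef]; field_simp
    have hL0 : 0 < L := by positivity
    have hL1 : L ≤ 1 := by
      rw [hLdef, div_le_one hden1]; linarith
    have h1γ' : 1 - γ = (1 + η - ξ) / η := by
      rw [hγ]; field_simp; ring
    have hmval : (2 : ℝ) / (1 - γ) = 2 * η * L := by
      rw [h1γ', div_div_eq_mul_div, hLdef, mul_one_div]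
    have hm0 : (0:ℝ) ≤ 2 * η * L := by positivity
    have hlb : ∀ v ∈ S, 2 * η * L ≤ v := by
      apply lowerb _ hm0
      intro x y
      refine ⟨L * (η * x - ξ) + (-1) * (1 - L), -(L * (η * y - ξ) + (-1) * (1 - L)),
        ?_, ?_, ?_⟩
      · exact hcd_bound L (-1) x hL0.le hL1 (by norm_num)
      · rw [abs_neg]; exact hcd_bound L (-1) y hL0.le hL1 (by norm_num)
      · linear_combination (4 + x - y) * hL
    rw [hmval]
    exact le_antisymm (csInf_le ⟨2 * η * L, hlb⟩ (hmval ▸ hmem))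
      (le_csInf ⟨_, hmval ▸ hmem⟩ hlb)
  · -- Region 2
    rintro ⟨h1, h2⟩
    have hρ1 : 1 < ρ := by
      rw [hρ, lt_div_iff₀ hη]; nlinarith
    have hρ3 : ρ ≤ 3 := by
      rw [hρ, div_le_iff₀ hη]; linarith
    have hηρ : η * ρ - ξ = 1 := by
      rw [hρ]; field_simp; ring
    have hGρ : G ρ = 1 := by
      rw [hG, hηρ]; norm_num
    have hval : (2 : ℝ) / (ρ - 1) = (|3 - ρ| * G ρ + |ρ + 1| * G ρ) / |2 - ρ - ρ| := by
      rw [hGρ, abs_of_nonneg (by linarith : (0:ℝ) ≤ 3 - ρ),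
        abs_of_nonneg (by linarith : (0:ℝ) ≤ ρ + 1),
        abs_of_neg (by linarith : 2 - ρ - ρ < (0:ℝ))]
      rw [div_eq_div_iff (by linarith : ρ - 1 ≠ 0) (by linarith : -(2 - ρ - ρ) ≠ 0)]
      ring
    have hmem : (2 : ℝ) / (ρ - 1) ∈ S := hval ▸ memdiag ρ (by linarith)
    have hden1 : (0:ℝ) < ξ + 1 - η := by linarith
    set L : ℝ := 1 / (ξ + 1 - η) with hLdef
    have hL : L * (ξ + 1 - η) = 1 := by
      rw [hLdef]; field_simp
    have hL0 : 0 < L := by positivity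
    have hL1 : L ≤ 1 := by
      rw [hLdef, div_le_one hden1]; linarith
    have hρ1' : ρ - 1 = (ξ + 1 - η) / η := by
      rw [hρ]; field_simp
    have hmval : (2 : ℝ) / (ρ - 1) = 2 * η * L := by
      rw [hρ1', div_div_eq_mul_div, hLdef, mul_one_div]
    have hm0 : (0:ℝ) ≤ 2 * η * L := by positivity
    have hlb : ∀ v ∈ S, 2 * η * L ≤ v := by
      apply lowerb _ hm0
      intro x y
      refine ⟨L * (η * x - ξ) + 1 * (1 - L), -(L * (η * y - ξ) + 1 * (1 - L)),
        ?_, ?_, ?_⟩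
      · exact hcd_bound L 1 x hL0.le hL1 (by norm_num)
      · rw [abs_neg]; exact hcd_bound L 1 y hL0.le hL1 (by norm_num)
      · linear_combination (-(4 + x - y)) * hL
    rw [hmval]
    exact le_antisymm (csInf_le ⟨2 * η * L, hlb⟩ (hmval ▸ hmem))
      (le_csInf ⟨_, hmval ▸ hmem⟩ hlb)
  · -- Region 3
    intro hA hB
    have hlb : ∀ v ∈ S, (1:ℝ) ≤ v := by
      apply lowerb _ zero_le_one
      intro x y
      refine ⟨-1, -1, ?_, ?_, by ring⟩
      · rw [abs_neg, abs_one]; exact hG1 x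
      · rw [abs_neg, abs_one]; exact hG1 y
    -- in this region γ < -1 or ρ > 3
    have hcase : ξ < 1 - η ∨ 3 * η - 1 < ξ := by
      rcases not_and_or.1 hA with h | h
      · left; exact lt_of_not_ge h
      · rcases not_and_or.1 hB with h' | h'
        · exact absurd (le_of_lt (lt_of_not_ge h')) (fun hh => h (le_trans (le_of_lt (lt_of_not_ge h')) (le_refl _)))
        · right; exact lt_of_not_ge h'
    have hmem : (1:ℝ) ∈ S := by
      rcases hcase with hc | hc
      · -- γ < -1 ; take t = min (-1) ρ
        set t : ℝ := min (-1) ρ with htdef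
        have ht1 : t ≤ -1 := min_le_left _ _
        have htρ : t ≤ ρ := min_le_right _ _
        have hγt : γ ≤ t := by
          have hγm1 : γ < -1 := by
            rw [hγ, div_lt_iff₀ hη]; linarith
          have hγρ : γ ≤ ρ := by
            rw [hγ, hρ, div_le_div_iff₀ hη hη]; nlinarith
          exact le_min (le_of_lt hγm1) hγρ
        have hηγ' : η * γ = ξ - 1 := by rw [hγ]; field_simp
        have hηρ' : η * ρ = ξ + 1 := by rw [hρ]; field_simp
        have hGt : G t = 1 := by
          rw [hG, max_eq_left]
          rw [abs_le]
          constructor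
          · have h := mul_le_mul_of_nonneg_left hγt (le_of_lt hη)
            linarith
          · have h := mul_le_mul_of_nonneg_left htρ (le_of_lt hη)
            linarith
        have hval : (1 : ℝ) = (|3 - t| * G t + |t + 1| * G t) / |2 - t - t| := by
          rw [hGt, abs_of_pos (by linarith : (0:ℝ) < 3 - t),
            abs_of_nonpos (by linarith : t + 1 ≤ (0:ℝ)),
            abs_of_pos (by linarith : (0:ℝ) < 2 - t - t)]
          rw [eq_div_iff (by linarith)]
          ring
        exact hval ▸ memdiag t (by linarith)
      · -- ρ > 3 ; take t = max 3 γ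
        set t : ℝ := max 3 γ with htdef
        have ht3 : 3 ≤ t := le_max_left _ _
        have htγ : γ ≤ t := le_max_right _ _
        have htρ : t ≤ ρ := by
          have h3ρ : (3:ℝ) < ρ := by
            rw [hρ, lt_div_iff₀ hη]; linarith
          have hγρ : γ ≤ ρ := by
            rw [hγ, hρ, div_le_div_iff₀ hη hη]; nlinarith
          exact max_le (le_of_lt h3ρ) hγρ
        have hηγ' : η * γ = ξ - 1 := by rw [hγ]; field_simp
        have hηρ' : η * ρ = ξ + 1 := by rw [hρ]; field_simp
        have hGt : G t = 1 := by
          rw [hG, max_eq_left]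
          rw [abs_le]
          constructor
          · have h := mul_le_mul_of_nonneg_left htγ (le_of_lt hη)
            linarith
          · have h := mul_le_mul_of_nonneg_left htρ (le_of_lt hη)
            linarith
        have hval : (1 : ℝ) = (|3 - t| * G t + |t + 1| * G t) / |2 - t - t| := by
          rw [hGt, abs_of_nonpos (by linarith : 3 - t ≤ (0:ℝ)),
            abs_of_pos (by linarith : (0:ℝ) < t + 1),
            abs_of_neg (by linarith : 2 - t - t < (0:ℝ))]
          rw [eq_div_iff (by linarith)]
          ring
        exact hval ▸ memdiag t (by linarith)
    exact le_antisymm (csInf_le ⟨1, hlb⟩ hmem) (le_csInf ⟨_, hmem⟩ hlb)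
end

section
/- Let ν be a real number with ν ≥ √2. Then for all w ∈ ℂ with |w| < 1, Re(ν²/(ν + w)²) > 0. -/
theorem stmt_8 (ν : ℝ) (hν : Real.sqrt 2 ≤ ν) :
    ∀ w : ℂ, ‖w‖ < 1 → 0 < ((ν : ℂ) ^ 2 / ((ν : ℂ) + w) ^ 2).re := by
  intro w hw
  have h2 : (0:ℝ) < Real.sqrt 2 := by positivity
  have hν0 : (0:ℝ) < ν := lt_of_lt_of_le h2 hν
  have hν2 : (2:ℝ) ≤ ν ^ 2 := by
    have := Real.sq_sqrt (by norm_num : (2:ℝ) ≥ 0)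
    nlinarith
  have hab : w.re ^ 2 + w.im ^ 2 < 1 := by
    have h1 : Complex.normSq w < 1 := by
      rw [← Complex.sq_norm]
      nlinarith [norm_nonneg w]
    rw [Complex.normSq_apply] at h1
    nlinarith
  set a := w.re
  set b := w.im
  have key : 0 < (ν + a) ^ 2 - b ^ 2 := by
    nlinarith [sq_nonneg (ν + 2 * a)]
  have hre : ((ν : ℂ) ^ 2 / ((ν : ℂ) + w) ^ 2).re
      = ν ^ 2 * ((ν + a) ^ 2 - b ^ 2) / (((ν + a) ^ 2 + b ^ 2) ^ 2) := by
    simp [Complex.div_re, Complex.normSq_apply, pow_two, Complex.add_re, Complex.add_im,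
      Complex.mul_re, Complex.mul_im, Complex.ofReal_re, Complex.ofReal_im]
    ring
  rw [hre]
  have hden : 0 < ((ν + a) ^ 2 + b ^ 2) ^ 2 := by nlinarith [sq_nonneg b]
  positivity
end

section
/- Let ν be a real number with ν ≥ √2(√2 + 1). Then for all z ∈ ℂ with |z| < 1, |(ν/(ν − z))² − 1| < 1; that is, the image of the unit disk under z ↦ ν/(ν − z) lies inside the right lobe of the lemniscate of Bernoulli |w² − 1| = 1. -/
theorem stmt_11 (ν : ℝ) (hν : Real.sqrt 2 * (Real.sqrt 2 + 1) ≤ ν) :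
    ∀ z : ℂ, ‖z‖ < 1 →
      ‖((ν : ℂ) / ((ν : ℂ) - z)) ^ 2 - 1‖ < 1 := by
  intro z hz
  have hs2 : Real.sqrt 2 * Real.sqrt 2 = 2 := Real.mul_self_sqrt (by norm_num)
  have hs2pos : (0:ℝ) < Real.sqrt 2 := Real.sqrt_pos.mpr (by norm_num)
  have hν2 : (2:ℝ) + Real.sqrt 2 ≤ ν := by nlinarith
  have hνpos : (0:ℝ) < ν := by nlinarith
  set x := z.re with hx
  set y := z.im with hy
  set a := ‖z‖ with ha
  have ha0 : 0 ≤ a := norm_nonneg z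
  have hxa : |x| ≤ a := Complex.abs_re_le_norm z
  have ha2 : a ^ 2 = x ^ 2 + y ^ 2 := by
    rw [ha, Complex.sq_norm, Complex.normSq_apply]; ring
  have hd : (ν : ℂ) - z ≠ 0 := by
    intro h
    have : ‖(ν : ℂ) - z‖ = 0 := by rw [h]; simp
    have h1 : ‖(ν : ℂ)‖ ≤ ‖(ν:ℂ) - z‖ + ‖z‖ := by
      calc ‖(ν : ℂ)‖ = ‖((ν:ℂ) - z) + z‖ := by ring_nf
        _ ≤ _ := norm_add_le _ _
    rw [this, Complex.norm_real, Real.norm_eq_abs, abs_of_pos hνpos] at h1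
    nlinarith
  set c := ‖(ν : ℂ) - z‖ with hc
  have hc0 : 0 < c := norm_pos_iff.mpr hd
  have hc2 : c ^ 2 = (ν - x) ^ 2 + y ^ 2 := by
    rw [hc, Complex.sq_norm, Complex.normSq_apply]
    simp [Complex.sub_re, Complex.sub_im]
    ring
  set b := ‖(2 * ν : ℂ) - z‖ with hb
  have hb0 : 0 ≤ b := norm_nonneg _
  have hb2 : b ^ 2 = (2 * ν - x) ^ 2 + y ^ 2 := by
    rw [hb, Complex.sq_norm, Complex.normSq_apply]
    simp [Complex.sub_re, Complex.sub_im]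
    ring
  -- rewrite the expression
  have key : ((ν : ℂ) / ((ν : ℂ) - z)) ^ 2 - 1 = z * ((2 * ν : ℂ) - z) / ((ν : ℂ) - z) ^ 2 := by
    field_simp
    ring
  rw [key, norm_div, norm_mul, norm_pow]
  rw [← ha, ← hb, ← hc]
  rw [div_lt_one (by positivity)]
  -- main inequality: a * b < c ^ 2
  have hxa' : x ≤ a := le_trans (le_abs_self x) hxa
  have hkey : ν - 2 * x > Real.sqrt 2 * a := by
    nlinarith [mul_pos hs2pos (show (0:ℝ) < 1 - a by linarith)]
  have h1 : 0 < ν - 2 * x - Real.sqrt 2 * a := by linarith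
  have h2 : 0 < ν - 2 * x + Real.sqrt 2 * a := by
    nlinarith [mul_nonneg hs2pos.le ha0]
  have hsq : 2 * a ^ 2 < (ν - 2 * x) ^ 2 := by nlinarith [mul_pos h1 h2]
  have h5 : 0 < ν ^ 2 * ((ν - 2 * x) ^ 2 - 2 * a ^ 2) :=
    mul_pos (by positivity) (by linarith)
  have h4 : (a * b) ^ 2 < (c ^ 2) ^ 2 := by nlinarith [h5, sq_nonneg y]
  have hab : 0 ≤ a * b := mul_nonneg ha0 hb0
  exact lt_of_pow_lt_pow_left₀ 2 (by positivity) h4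
end

section
/- For a = ν²/(ν² − 1) and r = ν/(ν² − 1) with ν ≥ 2 + √2, the open disk {w ∈ ℂ : |w − a| < r} is contained in the lemniscate region {w : |w² − 1| < 1}. -/
theorem stmt_12 (ν : ℝ) (hν : 2 + Real.sqrt 2 ≤ ν) :
    ∀ w : ℂ, ‖w - (ν ^ 2 / (ν ^ 2 - 1) : ℝ)‖ < ν / (ν ^ 2 - 1) →
      ‖w ^ 2 - 1‖ < 1 := by
  intro w hw
  have h2 : Real.sqrt 2 * Real.sqrt 2 = 2 := Real.mul_self_sqrt (by norm_num)
  have hs1 : (1:ℝ) ≤ Real.sqrt 2 := by nlinarith [Real.sqrt_nonneg 2]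
  have hν3 : (3:ℝ) ≤ ν := by linarith
  set a : ℝ := ν ^ 2 / (ν ^ 2 - 1) with ha
  set r : ℝ := ν / (ν ^ 2 - 1) with hr
  have hden : (0:ℝ) < ν ^ 2 - 1 := by nlinarith
  have hden1 : (0:ℝ) < ν - 1 := by linarith
  have ha1 : 1 < a := by rw [ha, lt_div_iff₀ hden]; nlinarith
  have hrpos : 0 < r := div_pos (by linarith) hden
  have hsum : a + r ≤ Real.sqrt 2 := by
    have heq : a + r = ν / (ν - 1) := by
      rw [ha, hr]
      field_simp
      ring
    rw [heq, div_le_iff₀ hden1]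
    nlinarith
  -- complex part
  set A : ℂ := ((a : ℝ) : ℂ) with hA
  have hdecomp : w ^ 2 - 1 = (w - A) ^ 2 + 2 * A * (w - A) + (A ^ 2 - 1) := by ring
  set m : ℝ := ‖w - A‖ with hm
  have hmlt : m < r := hw
  have hm0 : 0 ≤ m := norm_nonneg _
  have h1 : ‖(w - A) ^ 2‖ = m ^ 2 := by rw [norm_pow]
  have h2' : ‖2 * A * (w - A)‖ = 2 * a * m := by
    rw [norm_mul, norm_mul, hA, Complex.norm_real, Real.norm_eq_abs, Complex.norm_two,
      abs_of_pos (by linarith : (0:ℝ) < a)]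
  have h3 : ‖A ^ 2 - 1‖ = a ^ 2 - 1 := by
    have : A ^ 2 - 1 = ((a ^ 2 - 1 : ℝ) : ℂ) := by push_cast [hA]; ring
    rw [this, Complex.norm_real, Real.norm_eq_abs, abs_of_pos (by nlinarith : (0:ℝ) < a ^ 2 - 1)]
  have hbound : ‖w ^ 2 - 1‖ ≤ m ^ 2 + 2 * a * m + (a ^ 2 - 1) := by
    rw [hdecomp]
    calc ‖(w - A) ^ 2 + 2 * A * (w - A) + (A ^ 2 - 1)‖
        ≤ ‖(w - A) ^ 2 + 2 * A * (w - A)‖ + ‖A ^ 2 - 1‖ :=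
          norm_add_le _ _
      _ ≤ ‖(w - A) ^ 2‖ + ‖2 * A * (w - A)‖ + ‖A ^ 2 - 1‖ := by
          gcongr; exact norm_add_le _ _
      _ = m ^ 2 + 2 * a * m + (a ^ 2 - 1) := by rw [h1, h2', h3]
  nlinarith [hbound, hmlt, hm0, hsum, hrpos, ha1, h2]
end

section
/- Let λ ≥ 0, τ = (1+λ)²/(1+2λ), and let B₁ > 0, B₂ ∈ ℝ. Suppose a₂, a₃ are complex numbers such that for every x ∈ ℝ, |a₃ − x·a₂²| ≤ (B₁/(1+2λ))·max{1, |x·B₁/τ − B₂/B₁|} and |a₃ − (2 − x)·a₂²| ≤ (B₁/(1+2λ))·max{1, |x·B₁/τ − B₂/B₁|}. Then: if τB₂ ≤ B₁², |a₂| ≤ B₁√B₁ / √((1+2λ)(B₁² − τB₂ + τB₁)); and if τB₂ ≥ B₁², |a₂| ≤ B₁√B₁ / √((1+2λ)(τB₂ + τB₁ − B₁²)). -/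
lemma conclude_aux (B₁ E A : ℝ) (hB : 0 < B₁) (hE : 0 < E) (hA : 0 ≤ A)
    (h : A ^ 2 * E ≤ B₁ ^ 2 * B₁) : A ≤ B₁ * Real.sqrt B₁ / Real.sqrt E := by
  have h1 : A ≤ Real.sqrt (B₁ ^ 2 * B₁ / E) := by
    rw [show A = Real.sqrt (A ^ 2) from (Real.sqrt_sq hA).symm]
    apply Real.sqrt_le_sqrt
    rw [le_div_iff₀ hE]
    exact h
  have h2 : Real.sqrt (B₁ ^ 2 * B₁ / E) = B₁ * Real.sqrt B₁ / Real.sqrt E := by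
    rw [Real.sqrt_div (by positivity), Real.sqrt_mul (sq_nonneg _), Real.sqrt_sq hB.le]
  rwa [h2] at h1

theorem stmt_14 (lam τ B₁ B₂ : ℝ) (hlam : 0 ≤ lam) (hτ : τ = (1 + lam) ^ 2 / (1 + 2 * lam))
    (hB₁ : 0 < B₁) (a₂ a₃ : ℂ)
    (h1 : ∀ x : ℝ, ‖a₃ - (x : ℂ) * a₂ ^ 2‖
        ≤ B₁ / (1 + 2 * lam) * max 1 |x * B₁ / τ - B₂ / B₁|)
    (h2 : ∀ x : ℝ, ‖a₃ - ((2 : ℂ) - (x : ℂ)) * a₂ ^ 2‖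
        ≤ B₁ / (1 + 2 * lam) * max 1 |x * B₁ / τ - B₂ / B₁|) :
    (τ * B₂ ≤ B₁ ^ 2 →
      ‖a₂‖ ≤ B₁ * Real.sqrt B₁
        / Real.sqrt ((1 + 2 * lam) * (B₁ ^ 2 - τ * B₂ + τ * B₁))) ∧
    (B₁ ^ 2 ≤ τ * B₂ →
      ‖a₂‖ ≤ B₁ * Real.sqrt B₁
        / Real.sqrt ((1 + 2 * lam) * (τ * B₂ + τ * B₁ - B₁ ^ 2))) := by
  have hlam2 : (0:ℝ) < 1 + 2 * lam := by linarith
  have hτ0 : 0 < τ := by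
    rw [hτ]; apply div_pos; nlinarith; exact hlam2
  have key : ∀ x : ℝ, |x * B₁ / τ - B₂ / B₁| ≤ 1 →
      |1 - x| * ‖a₂‖ ^ 2 ≤ B₁ / (1 + 2 * lam) := by
    intro x hx
    have e : ((2 : ℂ) - 2 * (x : ℂ)) * a₂ ^ 2
        = (a₃ - (x : ℂ) * a₂ ^ 2) - (a₃ - ((2 : ℂ) - (x : ℂ)) * a₂ ^ 2) := by ring
    have tri : ‖((2 : ℂ) - 2 * (x : ℂ)) * a₂ ^ 2‖
        ≤ 2 * (B₁ / (1 + 2 * lam)) := by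
      rw [e]
      calc ‖(a₃ - (x : ℂ) * a₂ ^ 2) - (a₃ - ((2 : ℂ) - (x : ℂ)) * a₂ ^ 2)‖
          ≤ ‖a₃ - (x : ℂ) * a₂ ^ 2‖
            + ‖a₃ - ((2 : ℂ) - (x : ℂ)) * a₂ ^ 2‖ := by
            exact norm_sub_le _ _
        _ ≤ B₁ / (1 + 2 * lam) * max 1 |x * B₁ / τ - B₂ / B₁|
            + B₁ / (1 + 2 * lam) * max 1 |x * B₁ / τ - B₂ / B₁| := add_le_add (h1 x) (h2 x)
        _ = 2 * (B₁ / (1 + 2 * lam)) := by rw [max_eq_left hx]; ring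
    have e2 : ‖((2 : ℂ) - 2 * (x : ℂ)) * a₂ ^ 2‖
        = 2 * (|1 - x| * ‖a₂‖ ^ 2) := by
      rw [show ((2 : ℂ) - 2 * (x : ℂ)) = ((2 * (1 - x) : ℝ) : ℂ) by push_cast; ring]
      rw [norm_mul, norm_pow, Complex.norm_real, Real.norm_eq_abs, abs_mul]
      rw [abs_of_nonneg (by norm_num : (0:ℝ) ≤ 2)]
      ring
    rw [e2] at tri
    linarith
  constructor
  · intro hc
    set D : ℝ := B₁ ^ 2 - τ * B₂ + τ * B₁ with hD
    have hD0 : 0 < D := by nlinarith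
    set x : ℝ := τ * (B₂ - B₁) / B₁ ^ 2 with hxdef
    have hx : |x * B₁ / τ - B₂ / B₁| ≤ 1 := by
      have : x * B₁ / τ - B₂ / B₁ = -1 := by
        rw [hxdef]; field_simp; ring
      rw [this]; norm_num
    have hk := key x hx
    have h1x : |1 - x| = D / B₁ ^ 2 := by
      rw [hxdef, abs_of_nonneg]
      · rw [hD]; field_simp; ring
      · rw [sub_nonneg, div_le_one (by positivity)]; nlinarith
    rw [h1x] at hk
    apply conclude_aux _ _ _ hB₁ (by positivity) (norm_nonneg _)
    rw [div_mul_eq_mul_div, div_le_div_iff₀ (by positivity) hlam2] at hk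
    nlinarith
  · intro hc
    set D : ℝ := τ * B₂ + τ * B₁ - B₁ ^ 2 with hD
    have hD0 : 0 < D := by nlinarith
    set x : ℝ := τ * (B₂ + B₁) / B₁ ^ 2 with hxdef
    have hx : |x * B₁ / τ - B₂ / B₁| ≤ 1 := by
      have : x * B₁ / τ - B₂ / B₁ = 1 := by
        rw [hxdef]; field_simp; ring
      rw [this]; norm_num
    have hk := key x hx
    have h1x : |1 - x| = D / B₁ ^ 2 := by
      rw [hxdef, abs_of_nonpos]
      · rw [hD]; field_simp; ring
      · rw [sub_nonpos, le_div_iff₀ (by positivity)]; nlinarith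
    rw [h1x] at hk
    apply conclude_aux _ _ _ hB₁ (by positivity) (norm_nonneg _)
    rw [div_mul_eq_mul_div, div_le_div_iff₀ (by positivity) hlam2] at hk
    nlinarith
end

section
/- Let λ ≥ 0, τ = (1+λ)²/(1+2λ), B₁ > 0, B₂ ∈ ℝ, and let a₂, a₃ ∈ ℂ satisfy, for every x ∈ ℝ, |a₃ − x·a₂²| ≤ (B₁/(1+2λ))·G(x) and |a₃ − (2 − x)a₂²| ≤ (B₁/(1+2λ))·G(x), where G(x) = max{1, |xB₁/τ − B₂/B₁|}. Then |a₃| ≤ (B₁/(1+2λ))·max{B₁²/(B₁² − τB₂ + τB₁), 1} if τB₂ ≤ B₁², and |a₃| ≤ (B₁/(1+2λ))·max{B₁²/(τB₂ + τB₁ − B₁²), 1} if τB₂ ≥ B₁². -/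
lemma key_combine (C : ℝ) (a₂ a₃ : ℂ) (x : ℝ) (hx : (2:ℝ) - 2*x ≠ 0)
    (h1 : ‖a₃ - (x:ℂ)*a₂^2‖ ≤ C)
    (h2 : ‖a₃ - ((2:ℂ)-(x:ℂ))*a₂^2‖ ≤ C) :
    ‖a₃‖ ≤ (|2-x| + |x|)/|2-2*x| * C := by
  have hxC : ((2:ℂ) - 2*(x:ℂ)) ≠ 0 := by
    intro h
    apply hx
    have := congrArg Complex.re h
    simpa using this
  have hid : a₃ = (((2-x)/(2-2*x) : ℝ) : ℂ) * (a₃ - (x:ℂ)*a₂^2)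
      + (((-x)/(2-2*x) : ℝ) : ℂ) * (a₃ - ((2:ℂ)-(x:ℂ))*a₂^2) := by
    have hxC' : (1:ℂ) - (x:ℂ) ≠ 0 := by
      intro h; apply hxC; linear_combination 2*h
    push_cast
    field_simp
    ring
  have habs : ‖a₃‖ ≤ |(2-x)/(2-2*x)| * ‖a₃ - (x:ℂ)*a₂^2‖
      + |(-x)/(2-2*x)| * ‖a₃ - ((2:ℂ)-(x:ℂ))*a₂^2‖ := by
    calc ‖a₃‖ = ‖(((2-x)/(2-2*x) : ℝ) : ℂ) * (a₃ - (x:ℂ)*a₂^2)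
        + (((-x)/(2-2*x) : ℝ) : ℂ) * (a₃ - ((2:ℂ)-(x:ℂ))*a₂^2)‖ := by rw [← hid]
      _ ≤ _ := by
        refine (norm_add_le _ _).trans ?_
        rw [norm_mul, norm_mul, Complex.norm_real, Complex.norm_real, Real.norm_eq_abs, Real.norm_eq_abs]
  have hC0 : 0 ≤ C := le_trans (norm_nonneg _) h1
  have h1' : |(2-x)/(2-2*x)| * ‖a₃ - (x:ℂ)*a₂^2‖ ≤ |(2-x)/(2-2*x)| * C :=
    mul_le_mul_of_nonneg_left h1 (abs_nonneg _)
  have h2' : |(-x)/(2-2*x)| * ‖a₃ - ((2:ℂ)-(x:ℂ))*a₂^2‖ ≤ |(-x)/(2-2*x)| * C :=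
    mul_le_mul_of_nonneg_left h2 (abs_nonneg _)
  have : (|2-x| + |x|)/|2-2*x| * C = |(2-x)/(2-2*x)| * C + |(-x)/(2-2*x)| * C := by
    rw [abs_div, abs_div, abs_neg]
    ring
  rw [this]
  linarith

theorem stmt_15 (lam τ B₁ B₂ : ℝ) (hlam : 0 ≤ lam) (hτ : τ = (1 + lam) ^ 2 / (1 + 2 * lam))
    (hB₁ : 0 < B₁) (G : ℝ → ℝ) (hG : ∀ x, G x = max 1 |x * B₁ / τ - B₂ / B₁|)
    (a₂ a₃ : ℂ)
    (h1 : ∀ x : ℝ, ‖a₃ - (x : ℂ) * a₂ ^ 2‖ ≤ B₁ / (1 + 2 * lam) * G x)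
    (h2 : ∀ x : ℝ, ‖a₃ - ((2 : ℂ) - (x : ℂ)) * a₂ ^ 2‖
        ≤ B₁ / (1 + 2 * lam) * G x) :
    (τ * B₂ ≤ B₁ ^ 2 →
      ‖a₃‖ ≤ B₁ / (1 + 2 * lam) * max (B₁ ^ 2 / (B₁ ^ 2 - τ * B₂ + τ * B₁)) 1) ∧
    (B₁ ^ 2 ≤ τ * B₂ →
      ‖a₃‖ ≤ B₁ / (1 + 2 * lam) * max (B₁ ^ 2 / (τ * B₂ + τ * B₁ - B₁ ^ 2)) 1) := by
  have h2lam : (0:ℝ) < 1 + 2*lam := by linarith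
  have hτpos : 0 < τ := by
    rw [hτ]
    exact div_pos (by positivity) h2lam
  set C := B₁ / (1 + 2*lam) with hCdef
  have hC0 : 0 ≤ C := le_of_lt (div_pos hB₁ h2lam)
  have hB₁' : B₁ ≠ 0 := ne_of_gt hB₁
  have hτ' : τ ≠ 0 := ne_of_gt hτpos
  constructor
  · intro hcond
    set x := τ*(B₂ - B₁)/B₁^2 with hxdef
    have hGx : G x = 1 := by
      have hval : x * B₁ / τ - B₂ / B₁ = -1 := by
        rw [hxdef]; field_simp; ring
      rw [hG, hval]
      simp
    have hx1 : x < 1 := by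
      rw [hxdef, div_lt_one (by positivity)]
      nlinarith
    have hb1 := h1 x
    have hb2 := h2 x
    rw [hGx, mul_one] at hb1 hb2
    have hkey := key_combine C a₂ a₃ x (by intro h; nlinarith) hb1 hb2
    rcases le_or_gt x 0 with hx0 | hx0
    · have hfac : (|2-x| + |x|)/|2-2*x| = 1 := by
        rw [abs_of_nonneg (by linarith : (0:ℝ) ≤ 2-x), abs_of_nonpos hx0,
          abs_of_nonneg (by linarith : (0:ℝ) ≤ 2-2*x)]
        rw [div_eq_one_iff_eq (by linarith)]
        ring
      rw [hfac, one_mul] at hkey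
      have : C ≤ C * max (B₁ ^ 2 / (B₁ ^ 2 - τ * B₂ + τ * B₁)) 1 :=
        le_mul_of_one_le_right hC0 (le_max_right _ _)
      linarith
    · have hD : 0 < B₁ ^ 2 - τ * B₂ + τ * B₁ := by nlinarith
      have hfac : (|2-x| + |x|)/|2-2*x| = B₁^2 / (B₁ ^ 2 - τ * B₂ + τ * B₁) := by
        rw [abs_of_nonneg (by linarith : (0:ℝ) ≤ 2-x), abs_of_pos hx0,
          abs_of_nonneg (by linarith : (0:ℝ) ≤ 2-2*x)]
        rw [div_eq_div_iff (by intro h; nlinarith) hD.ne']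
        rw [hxdef]
        field_simp
        ring
      rw [hfac] at hkey
      calc ‖a₃‖ ≤ B₁^2 / (B₁ ^ 2 - τ * B₂ + τ * B₁) * C := hkey
        _ = C * (B₁^2 / (B₁ ^ 2 - τ * B₂ + τ * B₁)) := by ring
        _ ≤ C * max (B₁ ^ 2 / (B₁ ^ 2 - τ * B₂ + τ * B₁)) 1 :=
            mul_le_mul_of_nonneg_left (le_max_left _ _) hC0
  · intro hcond
    set x := τ*(B₂ + B₁)/B₁^2 with hxdef
    have hGx : G x = 1 := by
      have hval : x * B₁ / τ - B₂ / B₁ = 1 := by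
        rw [hxdef]; field_simp; ring
      rw [hG, hval]
      simp
    have hx1 : 1 < x := by
      rw [hxdef, lt_div_iff₀ (by positivity)]
      nlinarith
    have hb1 := h1 x
    have hb2 := h2 x
    rw [hGx, mul_one] at hb1 hb2
    have hkey := key_combine C a₂ a₃ x (by intro h; nlinarith) hb1 hb2
    rcases le_or_gt 2 x with hx0 | hx0
    · have hfac : (|2-x| + |x|)/|2-2*x| = 1 := by
        rw [abs_of_nonpos (by linarith : (2:ℝ)-x ≤ 0), abs_of_pos (by linarith : (0:ℝ) < x),
          abs_of_nonpos (by linarith : (2:ℝ)-2*x ≤ 0)]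
        rw [div_eq_one_iff_eq (by linarith)]
        ring
      rw [hfac, one_mul] at hkey
      have : C ≤ C * max (B₁ ^ 2 / (τ * B₂ + τ * B₁ - B₁ ^ 2)) 1 :=
        le_mul_of_one_le_right hC0 (le_max_right _ _)
      linarith
    · have hD : 0 < τ * B₂ + τ * B₁ - B₁ ^ 2 := by nlinarith
      have hfac : (|2-x| + |x|)/|2-2*x| = B₁^2 / (τ * B₂ + τ * B₁ - B₁ ^ 2) := by
        rw [abs_of_nonneg (by linarith : (0:ℝ) ≤ 2-x), abs_of_pos (by linarith : (0:ℝ) < x),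
          abs_of_nonpos (by linarith : (2:ℝ)-2*x ≤ 0)]
        rw [div_eq_div_iff (by intro h; nlinarith) hD.ne']
        rw [hxdef]
        field_simp
        ring
      rw [hfac] at hkey
      calc ‖a₃‖ ≤ B₁^2 / (τ * B₂ + τ * B₁ - B₁ ^ 2) * C := hkey
        _ = C * (B₁^2 / (τ * B₂ + τ * B₁ - B₁ ^ 2)) := by ring
        _ ≤ C * max (B₁ ^ 2 / (τ * B₂ + τ * B₁ - B₁ ^ 2)) 1 :=
            mul_le_mul_of_nonneg_left (le_max_left _ _) hC0
end

section
/- Suppose a₂, a₃ ∈ ℂ satisfy, for all x ∈ ℝ, |2a₃ − (x+1)a₂²| ≤ B₁·G(x) and |2a₃ − (3−x)a₂²| ≤ B₁·G(x), where B₁ > 0, B₂ ∈ ℝ, and G(x) = max{1, |xB₁ − B₂/B₁|}. Then: if B₂ ≤ B₁², |a₂| ≤ B₁√B₁/√(B₁² + B₁ − B₂); and if B₂ ≥ B₁², |a₂| ≤ B₁√B₁/√(B₂ + B₁ − B₁²). -/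
private lemma aux_sqrt (c B₁ d : ℝ) (hc : 0 ≤ c) (hB : 0 < B₁) (hd : 0 < d)
    (h : c ^ 2 * d ≤ B₁ ^ 3) : c ≤ B₁ * Real.sqrt B₁ / Real.sqrt d := by
  calc c = Real.sqrt (c ^ 2) := (Real.sqrt_sq hc).symm
    _ ≤ Real.sqrt (B₁ ^ 3 / d) := Real.sqrt_le_sqrt (by rw [le_div_iff₀ hd]; exact h)
    _ = B₁ * Real.sqrt B₁ / Real.sqrt d := by
        rw [show B₁ ^ 3 = B₁ ^ 2 * B₁ by ring, Real.sqrt_div (by positivity),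
          Real.sqrt_mul (by positivity), Real.sqrt_sq hB.le]

theorem stmt_17 (B₁ B₂ : ℝ) (hB₁ : 0 < B₁)
    (G : ℝ → ℝ) (hG : ∀ x, G x = max 1 |x * B₁ - B₂ / B₁|)
    (a₂ a₃ : ℂ)
    (h1 : ∀ x : ℝ, ‖2 * a₃ - ((x : ℂ) + 1) * a₂ ^ 2‖ ≤ B₁ * G x)
    (h2 : ∀ x : ℝ, ‖2 * a₃ - ((3 : ℂ) - (x : ℂ)) * a₂ ^ 2‖ ≤ B₁ * G x) :
    (B₂ ≤ B₁ ^ 2 →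
      ‖a₂‖ ≤ B₁ * Real.sqrt B₁ / Real.sqrt (B₁ ^ 2 + B₁ - B₂)) ∧
    (B₁ ^ 2 ≤ B₂ →
      ‖a₂‖ ≤ B₁ * Real.sqrt B₁ / Real.sqrt (B₂ + B₁ - B₁ ^ 2)) := by
  have hB₁' : B₁ ≠ 0 := hB₁.ne'
  have key : ∀ x : ℝ, |2 - 2 * x| * ‖a₂‖ ^ 2 ≤ 2 * (B₁ * G x) := by
    intro x
    have e : (2 * a₃ - ((x : ℂ) + 1) * a₂ ^ 2) - (2 * a₃ - ((3 : ℂ) - (x : ℂ)) * a₂ ^ 2)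
        = ((2 - 2 * x : ℝ) : ℂ) * a₂ ^ 2 := by push_cast; ring
    have tri : ‖((2 - 2 * x : ℝ) : ℂ) * a₂ ^ 2‖ ≤
        ‖2 * a₃ - ((x : ℂ) + 1) * a₂ ^ 2‖ +
        ‖2 * a₃ - ((3 : ℂ) - (x : ℂ)) * a₂ ^ 2‖ := by
      rw [← e]
      exact norm_sub_le _ _
    rw [norm_mul, norm_pow, Complex.norm_real, Real.norm_eq_abs] at tri
    have := h1 x
    have := h2 x
    linarith
  constructor
  · intro hc
    set d := B₁ ^ 2 + B₁ - B₂ with hdd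
    have hd : 0 < d := by nlinarith
    apply aux_sqrt _ _ _ (norm_nonneg _) hB₁ hd
    have hx := key ((B₂ - B₁) / B₁ ^ 2)
    have hGx : G ((B₂ - B₁) / B₁ ^ 2) = 1 := by
      rw [hG]
      have h0 : (B₂ - B₁) / B₁ ^ 2 * B₁ - B₂ / B₁ = -1 := by field_simp; ring
      rw [h0]; norm_num
    have habs : 2 - 2 * ((B₂ - B₁) / B₁ ^ 2) = 2 * d / B₁ ^ 2 := by
      field_simp; ring
    rw [hGx, habs, abs_of_nonneg (by positivity), div_mul_eq_mul_div,
      div_le_iff₀ (by positivity : (0:ℝ) < B₁ ^ 2)] at hx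
    nlinarith [hx]
  · intro hc
    set d := B₂ + B₁ - B₁ ^ 2 with hdd
    have hd : 0 < d := by nlinarith
    apply aux_sqrt _ _ _ (norm_nonneg _) hB₁ hd
    have hx := key ((B₂ + B₁) / B₁ ^ 2)
    have hGx : G ((B₂ + B₁) / B₁ ^ 2) = 1 := by
      rw [hG]
      have h0 : (B₂ + B₁) / B₁ ^ 2 * B₁ - B₂ / B₁ = 1 := by field_simp; ring
      rw [h0]; norm_num
    have habs : 2 - 2 * ((B₂ + B₁) / B₁ ^ 2) = -(2 * d / B₁ ^ 2) := by
      field_simp; ring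
    rw [hGx, habs, abs_neg, abs_of_nonneg (by positivity), div_mul_eq_mul_div,
      div_le_iff₀ (by positivity : (0:ℝ) < B₁ ^ 2)] at hx
    nlinarith [hx]
end

section
/- Suppose a₂, a₃ ∈ ℂ satisfy, for all x ∈ ℝ, |2a₃ − (x+1)a₂²| ≤ B₁·G(x) and |2a₃ − (3−x)a₂²| ≤ B₁·G(x), where B₁ > 0, B₂ ∈ ℝ, and G(x) = max{1, |xB₁ − B₂/B₁|}. Then |a₃| ≤ max{B₁³/(B₁² − B₂ + B₁), B₁/2} if B₂ ≤ B₁², and |a₃| ≤ max{B₁³/(B₂ + B₁ − B₁²), B₁/2} if B₂ ≥ B₁². -/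
/-- Key combination: from the two hypotheses at a single point `x`,
`4(1-x) a₃ = (3-x) u - (x+1) v`. -/
lemma stmt_18_aux (B₁ x : ℝ) (a₂ a₃ : ℂ)
    (hu : ‖2 * a₃ - ((x : ℂ) + 1) * a₂ ^ 2‖ ≤ B₁)
    (hv : ‖2 * a₃ - ((3 : ℂ) - (x : ℂ)) * a₂ ^ 2‖ ≤ B₁) :
    ‖a₃‖ * (4 * |1 - x|) ≤ (|3 - x| + |x + 1|) * B₁ := by
  have key : (4 : ℂ) * ((1 : ℂ) - (x : ℂ)) * a₃ =
      ((3 : ℂ) - (x : ℂ)) * (2 * a₃ - ((x : ℂ) + 1) * a₂ ^ 2)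
      - ((x : ℂ) + 1) * (2 * a₃ - ((3 : ℂ) - (x : ℂ)) * a₂ ^ 2) := by ring
  have h3 : ‖(3 : ℂ) - (x : ℂ)‖ = |3 - x| := by
    rw [show ((3 : ℂ) - (x : ℂ)) = ((3 - x : ℝ) : ℂ) by push_cast; ring,
      Complex.norm_real, Real.norm_eq_abs]
  have h4 : ‖(x : ℂ) + 1‖ = |x + 1| := by
    rw [show ((x : ℂ) + 1) = ((x + 1 : ℝ) : ℂ) by push_cast; ring,
      Complex.norm_real, Real.norm_eq_abs]
  have h1x : ‖(1 : ℂ) - (x : ℂ)‖ = |1 - x| := by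
    rw [show ((1 : ℂ) - (x : ℂ)) = ((1 - x : ℝ) : ℂ) by push_cast; ring,
      Complex.norm_real, Real.norm_eq_abs]
  have h2' : ‖((3 : ℂ) - (x : ℂ)) * (2 * a₃ - ((x : ℂ) + 1) * a₂ ^ 2)
      - ((x : ℂ) + 1) * (2 * a₃ - ((3 : ℂ) - (x : ℂ)) * a₂ ^ 2)‖
      ≤ |3 - x| * B₁ + |x + 1| * B₁ := by
    refine le_trans (norm_sub_le _ _) ?_
    rw [norm_mul, norm_mul, h3, h4]
    gcongr
  have h4' : ‖(4 : ℂ)‖ = 4 := by norm_num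
  calc ‖a₃‖ * (4 * |1 - x|)
      = ‖(4 : ℂ) * ((1 : ℂ) - (x : ℂ)) * a₃‖ := by
        rw [norm_mul, norm_mul, h4', h1x]; ring
    _ = ‖((3 : ℂ) - (x : ℂ)) * (2 * a₃ - ((x : ℂ) + 1) * a₂ ^ 2)
        - ((x : ℂ) + 1) * (2 * a₃ - ((3 : ℂ) - (x : ℂ)) * a₂ ^ 2)‖ := congrArg _ key
    _ ≤ |3 - x| * B₁ + |x + 1| * B₁ := h2'
    _ = (|3 - x| + |x + 1|) * B₁ := by ring

theorem stmt_18 (B₁ B₂ : ℝ) (hB₁ : 0 < B₁)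
    (G : ℝ → ℝ) (hG : ∀ x, G x = max 1 |x * B₁ - B₂ / B₁|)
    (a₂ a₃ : ℂ)
    (h1 : ∀ x : ℝ, ‖2 * a₃ - ((x : ℂ) + 1) * a₂ ^ 2‖ ≤ B₁ * G x)
    (h2 : ∀ x : ℝ, ‖2 * a₃ - ((3 : ℂ) - (x : ℂ)) * a₂ ^ 2‖ ≤ B₁ * G x) :
    (B₂ ≤ B₁ ^ 2 →
      ‖a₃‖ ≤ max (B₁ ^ 3 / (B₁ ^ 2 - B₂ + B₁)) (B₁ / 2)) ∧
    (B₁ ^ 2 ≤ B₂ →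
      ‖a₃‖ ≤ max (B₁ ^ 3 / (B₂ + B₁ - B₁ ^ 2)) (B₁ / 2)) := by
  have hA : 0 ≤ ‖a₃‖ := norm_nonneg _
  constructor
  · intro hc
    set x : ℝ := (B₂ / B₁ - 1) / B₁ with hxdef
    have hxB : x * B₁ ^ 2 = B₂ - B₁ := by
      rw [hxdef]; field_simp
      try ring
      try tauto
    have hxeq : x * B₁ - B₂ / B₁ = -1 := by
      rw [hxdef]; field_simp
      try ring
      try tauto
    have hGx : G x = 1 := by
      rw [hG, hxeq]; norm_num
    have hu := h1 x
    have hv := h2 x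
    rw [hGx, mul_one] at hu hv
    have hxlt : x < 1 := by
      nlinarith [sq_nonneg B₁]
    have key := stmt_18_aux B₁ x a₂ a₃ hu hv
    rw [abs_of_pos (by linarith : (0:ℝ) < 1 - x),
        abs_of_pos (by linarith : (0:ℝ) < 3 - x)] at key
    rcases le_or_gt (-1) x with hx1 | hx1
    · refine le_trans ?_ (le_max_left _ _)
      rw [abs_of_nonneg (by linarith : (0:ℝ) ≤ x + 1)] at key
      have hD : 0 < B₁ ^ 2 - B₂ + B₁ := by nlinarith
      rw [le_div_iff₀ hD]
      nlinarith [mul_le_mul_of_nonneg_right key (sq_nonneg B₁), hxB, hA]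
    · refine le_trans ?_ (le_max_right _ _)
      rw [abs_of_neg (by linarith : x + 1 < 0)] at key
      have h1x : 0 < 1 - x := by linarith
      rw [le_div_iff₀ (by norm_num : (0:ℝ) < 2)]
      nlinarith
  · intro hc
    set x : ℝ := (B₂ / B₁ + 1) / B₁ with hxdef
    have hxB : x * B₁ ^ 2 = B₂ + B₁ := by
      rw [hxdef]; field_simp
      try ring
      try tauto
    have hxeq : x * B₁ - B₂ / B₁ = 1 := by
      rw [hxdef]; field_simp
      try ring
      try tauto
    have hGx : G x = 1 := by
      rw [hG, hxeq]; norm_num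
    have hu := h1 x
    have hv := h2 x
    rw [hGx, mul_one] at hu hv
    have hxgt : 1 < x := by
      nlinarith [sq_nonneg B₁]
    have key := stmt_18_aux B₁ x a₂ a₃ hu hv
    rw [abs_of_neg (by linarith : 1 - x < 0),
        abs_of_pos (by linarith : (0:ℝ) < x + 1)] at key
    rcases le_or_gt x 3 with hx1 | hx1
    · refine le_trans ?_ (le_max_left _ _)
      rw [abs_of_nonneg (by linarith : (0:ℝ) ≤ 3 - x)] at key
      have hD : 0 < B₂ + B₁ - B₁ ^ 2 := by nlinarith
      rw [le_div_iff₀ hD]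
      nlinarith
    · refine le_trans ?_ (le_max_right _ _)
      rw [abs_of_neg (by linarith : 3 - x < 0)] at key
      have h1x : 0 < x - 1 := by linarith
      rw [le_div_iff₀ (by norm_num : (0:ℝ) < 2)]
      nlinarith
end
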